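/- arXiv:1312.0557 — 5 statements merged into one kernel-verified Lean document; each statement's English description precedes it below -/
import Mathlib

section
/- Let μ ∈ ℝ^p be nonzero and Σ a symmetric positive definite p×p matrix. Fix r ≥ 0 and R > 0. Then the portfolio w* = (R / √(μᵀΣ⁻¹μ)) Σ⁻¹μ satisfies the risk constraint w*ᵀΣw* ≤ R², and for every w ∈ ℝ^p with w ≠ 0 and wᵀΣw ≤ R², one has (wᵀμ - r)/√(wᵀΣw) ≤ (w*ᵀμ - r)/√(w*ᵀΣw*) = √(μᵀΣ⁻¹μ) - r/R. -/
/-!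
In the inner product `⟪x, y⟫ = xᵀ S y`, Cauchy–Schwarz applied to `v` and `S⁻¹ μ` gives
`vᵀμ ≤ √(vᵀSv) · √(μᵀS⁻¹μ)`. Hence a portfolio of risk `t = √(vᵀSv) ≤ R` has Sharpe ratio at most
`√(μᵀS⁻¹μ) - r / t ≤ √(μᵀS⁻¹μ) - r / R`, using `r ≥ 0`. The portfolio `w`, proportional to `S⁻¹ μ`,
is the equality case of Cauchy–Schwarz and is scaled to risk exactly `R`.
-/

open Matrix

namespace Matrix

variable {n : Type*} [Fintype n] [DecidableEq n]

theorem mulVec_nonsing_inv_mulVec {α : Type*} [CommRing α] {S : Matrix n n α} (hS : IsUnit S.det)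
    (v : n → α) : S *ᵥ (S⁻¹ *ᵥ v) = v := by
  rw [mulVec_mulVec, mul_nonsing_inv S hS, one_mulVec]

theorem PosSemidef.dotProduct_mulVec_sq_le {S : Matrix n n ℝ} (hS : S.PosSemidef) (x y : n → ℝ) :
    (x ⬝ᵥ S *ᵥ y) ^ 2 ≤ (x ⬝ᵥ S *ᵥ x) * (y ⬝ᵥ S *ᵥ y) := by
  simpa only [toBilin'_apply'] using (toBilin' S).apply_sq_le_of_symm
    (fun x ↦ by simpa only [toBilin'_apply', star_trivial] using hS.dotProduct_mulVec_nonneg x)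
    (LinearMap.BilinForm.isSymm_iff.mp
      (isSymm_toBilin'_iff_isSymm.mpr (isHermitian_iff_isSymm.mp hS.isHermitian))) x y

theorem PosDef.dotProduct_le_sqrt_mul_sqrt {S : Matrix n n ℝ} (hS : S.PosDef) (v μ : n → ℝ) :
    v ⬝ᵥ μ ≤ √(v ⬝ᵥ S *ᵥ v) * √(μ ⬝ᵥ S⁻¹ *ᵥ μ) := by
  have hcs := hS.posSemidef.dotProduct_mulVec_sq_le v (S⁻¹ *ᵥ μ)
  rw [mulVec_nonsing_inv_mulVec (isUnit_iff_ne_zero.mpr hS.det_pos.ne'),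
    dotProduct_comm (S⁻¹ *ᵥ μ)] at hcs
  have hvSv : 0 ≤ v ⬝ᵥ S *ᵥ v := by
    simpa only [star_trivial] using hS.posSemidef.dotProduct_mulVec_nonneg v
  rw [← Real.sqrt_mul hvSv]
  exact (le_abs_self _).trans (Real.abs_le_sqrt hcs)

end Matrix

theorem sub_div_le_sub_div_of_le_mul {a r s t R : ℝ} (ha : a ≤ t * s) (ht : 0 < t) (htR : t ≤ R)
    (hr : 0 ≤ r) : (a - r) / t ≤ s - r / R := by
  rw [div_le_iff₀ ht]
  have : r / R * t ≤ r := by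
    rw [div_mul_eq_mul_div, div_le_iff₀ (ht.trans_le htR)]
    exact mul_le_mul_of_nonneg_left htR hr
  nlinarith

theorem sharpe_optimal_portfolio {p : ℕ} (μ : Fin p → ℝ) (hμ : μ ≠ 0)
    (S : Matrix (Fin p) (Fin p) ℝ) (hS : S.PosDef)
    (r R : ℝ) (hr : 0 ≤ r) (hR : 0 < R)
    (w : Fin p → ℝ) (hw : w = (R / Real.sqrt (μ ⬝ᵥ S⁻¹ *ᵥ μ)) • (S⁻¹ *ᵥ μ)) :
    w ⬝ᵥ S *ᵥ w ≤ R ^ 2 ∧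
    (w ⬝ᵥ μ - r) / Real.sqrt (w ⬝ᵥ S *ᵥ w) = Real.sqrt (μ ⬝ᵥ S⁻¹ *ᵥ μ) - r / R ∧
    ∀ v : Fin p → ℝ, v ≠ 0 → v ⬝ᵥ S *ᵥ v ≤ R ^ 2 →
      (v ⬝ᵥ μ - r) / Real.sqrt (v ⬝ᵥ S *ᵥ v) ≤
        (w ⬝ᵥ μ - r) / Real.sqrt (w ⬝ᵥ S *ᵥ w) := by
  set q := μ ⬝ᵥ S⁻¹ *ᵥ μ
  have hq : 0 < q := hS.inv.dotProduct_mulVec_pos hμ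
  have hwμ : w ⬝ᵥ μ = R * √q := by
    rw [hw, smul_dotProduct, dotProduct_comm, smul_eq_mul]
    field_simp
    rw [Real.sq_sqrt hq.le]
  have hwSw : w ⬝ᵥ S *ᵥ w = R ^ 2 := by
    rw [hw, mulVec_smul, mulVec_nonsing_inv_mulVec (isUnit_iff_ne_zero.mpr hS.det_pos.ne'),
      dotProduct_smul, smul_dotProduct, dotProduct_comm, smul_eq_mul, smul_eq_mul]
    field_simp
    rw [Real.sq_sqrt hq.le]
  have hsharpe : (w ⬝ᵥ μ - r) / √(w ⬝ᵥ S *ᵥ w) = √q - r / R := by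
    rw [hwSw, Real.sqrt_sq hR.le, hwμ]
    field_simp
  refine ⟨hwSw.le, hsharpe, fun v hv hvR ↦ hsharpe ▸ ?_⟩
  exact sub_div_le_sub_div_of_le_mul (hS.dotProduct_le_sqrt_mul_sqrt v μ)
    (Real.sqrt_pos.mpr (hS.dotProduct_mulVec_pos hv)) (Real.sqrt_le_iff.mpr ⟨hR.le, hvR⟩) hr
end

section
/- Let μ ∈ ℝ^p be nonzero, Σ a symmetric positive definite p×p matrix, r > 0, R > 0, and let w* = (R / √(μᵀΣ⁻¹μ)) Σ⁻¹μ. If w ∈ ℝ^p is nonzero with wᵀΣw ≤ R² and (wᵀμ - r)/√(wᵀΣw) = √(μᵀΣ⁻¹μ) - r/R, then w = w*. -/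
/-!
With `v = S⁻¹μ` one has `wᵀμ = wᵀSv`, so by Cauchy–Schwarz for the inner product `(x, y) ↦ xᵀSy`,
`wᵀμ ≤ σM` where `σ = √(wᵀSw) ≤ R` and `M = √(μᵀS⁻¹μ) = √(vᵀSv)`. The optimality equation says
`wᵀμ = σM + r(1 - σ/R)`, so `r > 0` forces `σ = R` and equality in Cauchy–Schwarz, which pins `w`
down as the multiple of `v` of `S`-norm `R`.
-/

open Matrix

namespace Matrix

variable {n : Type*} [Fintype n] {S : Matrix n n ℝ}

lemma IsHermitian.dotProduct_mulVec_comm (hS : S.IsHermitian) (x y : n → ℝ) :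
    x ⬝ᵥ S *ᵥ y = y ⬝ᵥ S *ᵥ x := by
  rw [← dotProduct_transpose_mulVec, (isHermitian_iff_isSymm.mp hS).eq]

lemma IsHermitian.dotProduct_mulVec_smul_sub_smul (hS : S.IsHermitian) (x y : n → ℝ) (a b : ℝ) :
    (b • x - a • y) ⬝ᵥ S *ᵥ (b • x - a • y) =
      b ^ 2 * (x ⬝ᵥ S *ᵥ x) - 2 * a * b * (x ⬝ᵥ S *ᵥ y) + a ^ 2 * (y ⬝ᵥ S *ᵥ y) := by
  simp only [mulVec_sub, mulVec_smul, dotProduct_sub, sub_dotProduct, dotProduct_smul,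
    smul_dotProduct, smul_eq_mul, hS.dotProduct_mulVec_comm y x]
  ring

lemma PosSemidef.dotProduct_mulVec_le_mul (hS : S.PosSemidef) {x y : n → ℝ} {a b : ℝ}
    (hx : x ⬝ᵥ S *ᵥ x = a ^ 2) (hy : y ⬝ᵥ S *ᵥ y = b ^ 2) (ha : 0 < a) (hb : 0 < b) :
    x ⬝ᵥ S *ᵥ y ≤ a * b := by
  have hnonneg := hS.dotProduct_mulVec_nonneg (b • x - a • y)
  rw [star_trivial, hS.isHermitian.dotProduct_mulVec_smul_sub_smul, hx, hy] at hnonneg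
  nlinarith [mul_pos ha hb]

lemma PosDef.smul_eq_smul_of_dotProduct_mulVec_eq_mul (hS : S.PosDef) {x y : n → ℝ} {a b : ℝ}
    (hx : x ⬝ᵥ S *ᵥ x = a ^ 2) (hy : y ⬝ᵥ S *ᵥ y = b ^ 2) (hxy : x ⬝ᵥ S *ᵥ y = a * b) :
    b • x = a • y := by
  by_contra hne
  have hpos := hS.dotProduct_mulVec_pos (sub_ne_zero.mpr hne)
  rw [star_trivial, hS.isHermitian.dotProduct_mulVec_smul_sub_smul, hx, hy, hxy] at hpos
  nlinarith

end Matrix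

theorem sharpe_optimal_portfolio_unique {p : ℕ} (μ : Fin p → ℝ) (hμ : μ ≠ 0)
    (S : Matrix (Fin p) (Fin p) ℝ) (hS : S.PosDef)
    (r R : ℝ) (hr : 0 < r) (hR : 0 < R)
    (wstar : Fin p → ℝ) (hwstar : wstar = (R / Real.sqrt (μ ⬝ᵥ S⁻¹ *ᵥ μ)) • (S⁻¹ *ᵥ μ))
    (w : Fin p → ℝ) (hw : w ≠ 0) (hrisk : w ⬝ᵥ S *ᵥ w ≤ R ^ 2)
    (hopt : (w ⬝ᵥ μ - r) / Real.sqrt (w ⬝ᵥ S *ᵥ w) = Real.sqrt (μ ⬝ᵥ S⁻¹ *ᵥ μ) - r / R) :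
    w = wstar := by
  set v := S⁻¹ *ᵥ μ
  set M := Real.sqrt (μ ⬝ᵥ v)
  set σ := Real.sqrt (w ⬝ᵥ S *ᵥ w)
  have hμSμ : 0 < μ ⬝ᵥ v := by simpa using hS.inv.dotProduct_mulVec_pos hμ
  have hwSw : 0 < w ⬝ᵥ S *ᵥ w := by simpa using hS.dotProduct_mulVec_pos hw
  have hM : 0 < M := Real.sqrt_pos.mpr hμSμ
  have hσ : 0 < σ := Real.sqrt_pos.mpr hwSw
  have hSv : S *ᵥ v = μ := by
    rw [mulVec_mulVec, mul_nonsing_inv S hS.det_pos.ne'.isUnit, one_mulVec]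
  have hvv : v ⬝ᵥ S *ᵥ v = M ^ 2 := by rw [hSv, dotProduct_comm, Real.sq_sqrt hμSμ.le]
  have hww : w ⬝ᵥ S *ᵥ w = σ ^ 2 := (Real.sq_sqrt hwSw.le).symm
  have hσR : σ ≤ R := Real.sqrt_le_left hR.le |>.mpr hrisk
  have hreturn : w ⬝ᵥ S *ᵥ v = σ * M + r * (1 - σ / R) := by
    rw [hSv]
    field_simp at hopt ⊢
    linarith
  have hCS := hS.posSemidef.dotProduct_mulVec_le_mul hww hvv hσ hM
  have hσ_eq : σ = R := by
    by_contra hne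
    have hgap : 0 < r * (1 - σ / R) :=
      mul_pos hr (sub_pos.mpr ((div_lt_one hR).mpr (hσR.lt_of_ne hne)))
    linarith
  have hparallel : M • w = σ • v :=
    hS.smul_eq_smul_of_dotProduct_mulVec_eq_mul hww hvv (by rw [hreturn, hσ_eq]; field_simp; ring)
  rw [hwstar, ← hσ_eq, div_eq_inv_mul, mul_smul, ← hparallel, smul_smul, inv_mul_cancel₀ hM.ne',
    one_smul]
end

section
/- Let μ ∈ ℝ^p, Σ symmetric positive definite p×p, G a k×p matrix of rank k, and assume ζ² := μᵀΣ⁻¹μ - μᵀGᵀ(GΣGᵀ)⁻¹Gμ > 0. Fix r ≥ 0 and R > 0. Then w* = (R/ζ)(Σ⁻¹μ - Gᵀ(GΣGᵀ)⁻¹Gμ) satisfies GΣw* = 0 and w*ᵀΣw* ≤ R², and it maximizes (wᵀμ - r)/√(wᵀΣw) over all nonzero w with GΣw = 0 and wᵀΣw ≤ R², attaining the value ζ - r/R. -/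
open Matrix

private lemma dot_aux {p q : ℕ} (A : Matrix (Fin p) (Fin q) ℝ) (μ : Fin q → ℝ)
    (x : Fin p → ℝ) : (A *ᵥ μ) ⬝ᵥ x = μ ⬝ᵥ (Aᵀ *ᵥ x) := by
  rw [dotProduct_comm, dotProduct_mulVec, ← mulVec_transpose, dotProduct_comm]

theorem hedged_sharpe_optimal_portfolio {p k : ℕ} (μ : Fin p → ℝ)
    (S : Matrix (Fin p) (Fin p) ℝ) (hS : S.PosDef)
    (G : Matrix (Fin k) (Fin p) ℝ) (hG : G.rank = k)
    (hζ : 0 < μ ⬝ᵥ S⁻¹ *ᵥ μ - μ ⬝ᵥ (Gᵀ * (G * S * Gᵀ)⁻¹ * G) *ᵥ μ)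
    (r R : ℝ) (hr : 0 ≤ r) (hR : 0 < R)
    (ζ : ℝ)
    (hζdef : ζ = Real.sqrt (μ ⬝ᵥ S⁻¹ *ᵥ μ - μ ⬝ᵥ (Gᵀ * (G * S * Gᵀ)⁻¹ * G) *ᵥ μ))
    (wstar : Fin p → ℝ)
    (hwstar : wstar = (R / ζ) • (S⁻¹ *ᵥ μ - (Gᵀ * (G * S * Gᵀ)⁻¹ * G) *ᵥ μ)) :
    (G * S) *ᵥ wstar = 0 ∧
    wstar ⬝ᵥ S *ᵥ wstar ≤ R ^ 2 ∧
    (wstar ⬝ᵥ μ - r) / Real.sqrt (wstar ⬝ᵥ S *ᵥ wstar) = ζ - r / R ∧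
    ∀ w : Fin p → ℝ, w ≠ 0 → (G * S) *ᵥ w = 0 → w ⬝ᵥ S *ᵥ w ≤ R ^ 2 →
      (w ⬝ᵥ μ - r) / Real.sqrt (w ⬝ᵥ S *ᵥ w) ≤ ζ - r / R := by
  classical
  set z := μ ⬝ᵥ S⁻¹ *ᵥ μ - μ ⬝ᵥ (Gᵀ * (G * S * Gᵀ)⁻¹ * G) *ᵥ μ with hz
  set B := (G * S * Gᵀ)⁻¹ with hB
  set v := S⁻¹ *ᵥ μ - (Gᵀ * B * G) *ᵥ μ with hv
  -- basic facts about S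
  have hSsym : Sᵀ = S := by
    have := hS.1
    rwa [Matrix.IsHermitian, conjTranspose_eq_transpose_of_trivial] at this
  have hSdet : IsUnit S.det := hS.isUnit.map (Matrix.detMonoidHom)
  have hSpos : ∀ x : Fin p → ℝ, x ≠ 0 → 0 < x ⬝ᵥ S *ᵥ x := by
    intro x hx
    simpa using hS.dotProduct_mulVec_pos hx
  -- rows of G are linearly independent
  have hli : LinearIndependent ℝ (fun i => G i) := by
    rw [linearIndependent_iff_card_eq_finrank_span]
    rw [G.rank_eq_finrank_span_row] at hG
    simp [Set.finrank, ← hG]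
    rfl
  have hGTinj : ∀ x : Fin k → ℝ, Gᵀ *ᵥ x = 0 → x = 0 := by
    intro x hx
    have hinj : Function.Injective G.vecMul := Matrix.vecMul_injective_iff.2 hli
    have : G.vecMul x = G.vecMul 0 := by
      simpa [Matrix.vecMul_zero, ← Matrix.mulVec_transpose] using hx
    exact hinj this
  -- G * S * Gᵀ is positive definite
  have hGSG : (G * S * Gᵀ).PosDef := by
    refine Matrix.PosDef.of_dotProduct_mulVec_pos ?_ ?_
    · rw [Matrix.IsHermitian, conjTranspose_eq_transpose_of_trivial]
      rw [transpose_mul, transpose_mul, transpose_transpose, hSsym, Matrix.mul_assoc]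
    · intro x hx
      have hx' : Gᵀ *ᵥ x ≠ 0 := fun h => hx (hGTinj x h)
      have := hSpos (Gᵀ *ᵥ x) hx'
      have heq : x ⬝ᵥ (G * S * Gᵀ) *ᵥ x = (Gᵀ *ᵥ x) ⬝ᵥ S *ᵥ (Gᵀ *ᵥ x) := by
        rw [← mulVec_mulVec, ← mulVec_mulVec, dotProduct_mulVec, ← mulVec_transpose]
      simpa [heq] using this
  have hGSGdet : IsUnit (G * S * Gᵀ).det := hGSG.isUnit.map (Matrix.detMonoidHom)
  have hBinv : G * S * Gᵀ * B = 1 := Matrix.mul_nonsing_inv _ hGSGdet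
  have hBsym : Bᵀ = B := by
    rw [hB, transpose_nonsing_inv]
    congr 1
    rw [transpose_mul, transpose_mul, transpose_transpose, hSsym, Matrix.mul_assoc]
  -- G S v = 0
  have hGSv : (G * S) *ᵥ v = 0 := by
    rw [hv, mulVec_sub, mulVec_mulVec, mulVec_mulVec]
    have h1 : G * S * S⁻¹ = G := by
      rw [Matrix.mul_assoc, Matrix.mul_nonsing_inv _ hSdet, Matrix.mul_one]
    have h2 : G * S * (Gᵀ * B * G) = G := by
      rw [show Gᵀ * B * G = Gᵀ * B * G from rfl, ← Matrix.mul_assoc, ← Matrix.mul_assoc,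
        hBinv, Matrix.one_mul]
    rw [h1, h2, sub_self]
  -- key identity : v ⬝ᵥ S *ᵥ w = μ ⬝ᵥ w whenever (G*S) *ᵥ w = 0
  have hkey : ∀ w : Fin p → ℝ, (G * S) *ᵥ w = 0 → v ⬝ᵥ S *ᵥ w = μ ⬝ᵥ w := by
    intro w hw
    rw [hv, sub_dotProduct, dot_aux, dot_aux]
    have h1 : (S⁻¹)ᵀ *ᵥ S *ᵥ w = w := by
      rw [mulVec_mulVec, transpose_nonsing_inv, hSsym, Matrix.nonsing_inv_mul _ hSdet,
        one_mulVec]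
    have hm : (Gᵀ * B * G)ᵀ * S = Gᵀ * B * (G * S) := by
      rw [transpose_mul, transpose_mul, transpose_transpose, hBsym]
      simp [Matrix.mul_assoc]
    have h2 : (Gᵀ * B * G)ᵀ *ᵥ S *ᵥ w = 0 := by
      rw [mulVec_mulVec, hm, ← mulVec_mulVec, hw, mulVec_zero]
    rw [h1, h2, dotProduct_zero, sub_zero]
  -- v ⬝ᵥ S *ᵥ v = z
  have hμv : μ ⬝ᵥ v = z := by
    rw [hv, dotProduct_sub]
  have hvSv : v ⬝ᵥ S *ᵥ v = z := by
    rw [hkey v hGSv, hμv]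
  -- ζ facts
  have hζpos : 0 < ζ := by rw [hζdef]; exact Real.sqrt_pos.2 hζ
  have hζsq : ζ ^ 2 = z := by rw [hζdef]; exact Real.sq_sqrt hζ.le
  -- symmetry of the bilinear form
  have hsymm : ∀ a b : Fin p → ℝ, a ⬝ᵥ S *ᵥ b = b ⬝ᵥ S *ᵥ a := by
    intro a b
    rw [dotProduct_mulVec, ← mulVec_transpose, hSsym, dotProduct_comm]
  -- wstar computations
  have hwSw : wstar ⬝ᵥ S *ᵥ wstar = R ^ 2 := by
    rw [hwstar, smul_dotProduct, mulVec_smul, dotProduct_smul, smul_eq_mul,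
      smul_eq_mul, hvSv, ← hζsq]
    field_simp
  have hwμ : wstar ⬝ᵥ μ = R * ζ := by
    rw [hwstar, smul_dotProduct, smul_eq_mul, dotProduct_comm, hμv, ← hζsq]
    field_simp
  have hGSw : (G * S) *ᵥ wstar = 0 := by
    rw [hwstar, mulVec_smul, hGSv, smul_zero]
  refine ⟨hGSw, hwSw.le, ?_, ?_⟩
  · rw [hwμ, hwSw, Real.sqrt_sq hR.le]
    field_simp
  · -- optimality
    intro w hw0 hGw hRb
    have hwpos : 0 < w ⬝ᵥ S *ᵥ w := hSpos w hw0
    set s := Real.sqrt (w ⬝ᵥ S *ᵥ w) with hs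
    have hspos : 0 < s := Real.sqrt_pos.2 hwpos
    have hssq : s ^ 2 = w ⬝ᵥ S *ᵥ w := Real.sq_sqrt hwpos.le
    have hsR : s ≤ R := by
      rw [hs, show R = Real.sqrt (R ^ 2) from (Real.sqrt_sq hR.le).symm]
      exact Real.sqrt_le_sqrt hRb
    -- Cauchy–Schwarz : (v ⬝ᵥ S *ᵥ w)^2 ≤ z * (w ⬝ᵥ S *ᵥ w)
    have hCS : (v ⬝ᵥ S *ᵥ w) ^ 2 ≤ z * (w ⬝ᵥ S *ᵥ w) := by
      have hquad : ∀ t : ℝ, 0 ≤ z * (t * t) + (-2 * (v ⬝ᵥ S *ᵥ w)) * t + w ⬝ᵥ S *ᵥ w := by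
        intro t
        have hnn : 0 ≤ (w - t • v) ⬝ᵥ S *ᵥ (w - t • v) := by
          by_cases h : w - t • v = 0
          · rw [h]; simp
          · exact (hSpos _ h).le
        have hexp : (w - t • v) ⬝ᵥ S *ᵥ (w - t • v)
            = w ⬝ᵥ S *ᵥ w - 2 * t * (v ⬝ᵥ S *ᵥ w) + t * t * z := by
          simp only [sub_dotProduct, dotProduct_sub, mulVec_sub, mulVec_smul,
            smul_dotProduct, dotProduct_smul, smul_eq_mul]
          rw [hvSv, hsymm w v]
          ring
        rw [hexp] at hnn
        linarith
      have := discrim_le_zero hquad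
      rw [discrim] at this
      nlinarith
    have hμw : μ ⬝ᵥ w ≤ ζ * s := by
      have h1 : μ ⬝ᵥ w = v ⬝ᵥ S *ᵥ w := ((hkey w hGw).symm).trans rfl |>.symm ▸ (hkey w hGw).symm
      have h2 : (ζ * s) ^ 2 = z * (w ⬝ᵥ S *ᵥ w) := by
        rw [mul_pow, hζsq, hssq]
      have h3 : 0 ≤ ζ * s := (mul_pos hζpos hspos).le
      nlinarith [hCS, hkey w hGw]
    rw [dotProduct_comm] at hμw
    have step1 : (w ⬝ᵥ μ - r) / s ≤ ζ - r / s := by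
      rw [div_le_iff₀ hspos] at *
      have : (ζ - r / s) * s = ζ * s - r := by field_simp
      rw [this]
      linarith
    have step2 : r / R ≤ r / s := by
      apply div_le_div_of_nonneg_left hr hspos hsR
    calc (w ⬝ᵥ μ - r) / s ≤ ζ - r / s := step1
      _ ≤ ζ - r / R := by linarith
end

section
/- Let J be a k×p real matrix with JJᵀ = I_k, μ ∈ ℝ^p, Σ symmetric positive definite, and suppose Jμ ≠ 0. Fix r ≥ 0, R > 0. Then w* = c Jᵀ(JΣJᵀ)⁻¹Jμ with c = R/√(μᵀJᵀ(JΣJᵀ)⁻¹Jμ) maximizes (wᵀμ - r)/√(wᵀΣw) over all nonzero w of the form w = Jᵀx (x ∈ ℝ^k) with wᵀΣw ≤ R². -/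
/-!
Writing an admissible portfolio as `w = Jᵀ x` turns risk and return into `xᵀ A x` and `xᵀ m`,
with `A = J Σ Jᵀ` positive definite and `m = J μ`. Cauchy–Schwarz for the inner product defined
by `A`, applied to `x` and `A⁻¹ m`, gives `xᵀ m ≤ √(xᵀ A x) · √q` with `q = mᵀ A⁻¹ m > 0`, so
the Sharpe ratio of `w` is at most `√q - r / √(xᵀ A x) ≤ √q - r / R`. The portfolio `w*`
has risk exactly `R` and return `R √q`, so it attains this bound.
-/

open Matrix

namespace Matrix

variable {m n : Type*} [Fintype m] [Fintype n]

theorem transpose_mulVec_dotProduct {R : Type*} [CommSemiring R] (B : Matrix m n R)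
    (x : m → R) (v : n → R) : (Bᵀ *ᵥ x) ⬝ᵥ v = x ⬝ᵥ B *ᵥ v := by
  rw [mulVec_transpose, dotProduct_mulVec]

theorem mulVec_dotProduct_mulVec_mulVec {R : Type*} [CommSemiring R] (B : Matrix m n R)
    (S : Matrix m m R) (x : n → R) : (B *ᵥ x) ⬝ᵥ S *ᵥ (B *ᵥ x) = x ⬝ᵥ (Bᵀ * S * B) *ᵥ x := by
  rw [← transpose_transpose B, transpose_mulVec_dotProduct, transpose_transpose,
    mulVec_mulVec, mulVec_mulVec]

theorem inv_mulVec_dotProduct_mulVec_inv_mulVec [DecidableEq n] {R : Type*} [CommRing R]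
    {A : Matrix n n R} (hA : IsUnit A.det) (v : n → R) :
    (A⁻¹ *ᵥ v) ⬝ᵥ A *ᵥ (A⁻¹ *ᵥ v) = v ⬝ᵥ A⁻¹ *ᵥ v := by
  rw [mulVec_mulVec, mul_nonsing_inv A hA, one_mulVec, dotProduct_comm]

theorem PosDef.mul_mul_transpose_of_mul_transpose_eq_one [DecidableEq m] {S : Matrix n n ℝ}
    (hS : S.PosDef) {J : Matrix m n ℝ} (hJ : J * Jᵀ = 1) : (J * S * Jᵀ).PosDef := by
  have hinj : Function.Injective J.vecMul := fun x y hxy => by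
    simpa [vecMul_vecMul, hJ] using congrArg (· ᵥ* Jᵀ) hxy
  simpa [conjTranspose_eq_transpose_of_trivial] using hS.mul_mul_conjTranspose_same hinj

theorem PosSemidef.dotProduct_mulVec_le_sqrt_mul_sqrt {M : Matrix n n ℝ} (hM : M.PosSemidef)
    (x y : n → ℝ) : x ⬝ᵥ M *ᵥ y ≤ √(x ⬝ᵥ M *ᵥ x) * √(y ⬝ᵥ M *ᵥ y) := by
  let := M.toSeminormedAddCommGroup hM
  let := M.toInnerProductSpace hM
  have h := real_inner_le_norm x y
  rw [norm_eq_sqrt_re_inner (𝕜 := ℝ), norm_eq_sqrt_re_inner (𝕜 := ℝ)] at h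
  change (M *ᵥ y) ⬝ᵥ star x ≤ √((M *ᵥ x) ⬝ᵥ star x) * √((M *ᵥ y) ⬝ᵥ star y) at h
  simpa only [star_trivial, dotProduct_comm] using h

theorem PosDef.dotProduct_le_sqrt_mul_sqrt_inv [DecidableEq n] {A : Matrix n n ℝ}
    (hA : A.PosDef) (x v : n → ℝ) : x ⬝ᵥ v ≤ √(x ⬝ᵥ A *ᵥ x) * √(v ⬝ᵥ A⁻¹ *ᵥ v) := by
  have hdet : IsUnit A.det := (isUnit_iff_isUnit_det A).mp hA.isUnit
  have h := hA.posSemidef.dotProduct_mulVec_le_sqrt_mul_sqrt x (A⁻¹ *ᵥ v)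
  rwa [inv_mulVec_dotProduct_mulVec_inv_mulVec hdet, mulVec_mulVec, mul_nonsing_inv A hdet,
    one_mulVec] at h

end Matrix

theorem sub_div_le_mul_sub_div {a r s R σ : ℝ} (hr : 0 ≤ r) (hs : 0 < s) (hsR : s ≤ R)
    (ha : a ≤ s * σ) : (a - r) / s ≤ (R * σ - r) / R := by
  have hR : 0 < R := hs.trans_le hsR
  calc (a - r) / s ≤ σ - r / s := by
        rw [sub_div]; gcongr; rwa [div_le_iff₀ hs, mul_comm]
    _ ≤ σ - r / R := by gcongr
    _ = (R * σ - r) / R := by field_simp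

theorem subspace_sharpe_optimal_portfolio {p k : ℕ} (μ : Fin p → ℝ)
    (S : Matrix (Fin p) (Fin p) ℝ) (hS : S.PosDef)
    (J : Matrix (Fin k) (Fin p) ℝ) (hJ : J * Jᵀ = 1)
    (hJμ : J *ᵥ μ ≠ 0)
    (r R : ℝ) (hr : 0 ≤ r) (hR : 0 < R)
    (wstar : Fin p → ℝ)
    (hwstar : wstar =
      (R / Real.sqrt (μ ⬝ᵥ (Jᵀ * (J * S * Jᵀ)⁻¹ * J) *ᵥ μ)) •
        ((Jᵀ * (J * S * Jᵀ)⁻¹ * J) *ᵥ μ)) :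
    (∃ x : Fin k → ℝ, wstar = Jᵀ *ᵥ x) ∧
    wstar ⬝ᵥ S *ᵥ wstar ≤ R ^ 2 ∧
    ∀ w : Fin p → ℝ, w ≠ 0 → (∃ x : Fin k → ℝ, w = Jᵀ *ᵥ x) →
      w ⬝ᵥ S *ᵥ w ≤ R ^ 2 →
      (w ⬝ᵥ μ - r) / Real.sqrt (w ⬝ᵥ S *ᵥ w) ≤
        (wstar ⬝ᵥ μ - r) / Real.sqrt (wstar ⬝ᵥ S *ᵥ wstar) := by
  set A := J * S * Jᵀ
  have hA : A.PosDef := hS.mul_mul_transpose_of_mul_transpose_eq_one hJ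
  have risk (x : Fin k → ℝ) : (Jᵀ *ᵥ x) ⬝ᵥ S *ᵥ (Jᵀ *ᵥ x) = x ⬝ᵥ A *ᵥ x := by
    simpa using mulVec_dotProduct_mulVec_mulVec Jᵀ S x
  set q := J *ᵥ μ ⬝ᵥ A⁻¹ *ᵥ (J *ᵥ μ)
  have hq : 0 < q := by simpa only [star_trivial] using hA.inv.dotProduct_mulVec_pos hJμ
  set xstar := (R / √q) • A⁻¹ *ᵥ (J *ᵥ μ)
  have hw : wstar = Jᵀ *ᵥ xstar := by
    rw [hwstar, ← mulVec_dotProduct_mulVec_mulVec, ← mulVec_mulVec, ← mulVec_mulVec, mulVec_smul]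
  have hrisk : wstar ⬝ᵥ S *ᵥ wstar = R ^ 2 := by
    rw [hw, risk, mulVec_smul, dotProduct_smul, smul_dotProduct,
      inv_mulVec_dotProduct_mulVec_inv_mulVec ((isUnit_iff_isUnit_det A).mp hA.isUnit)]
    simp only [smul_eq_mul]
    field_simp
    exact (Real.sq_sqrt hq.le).symm
  have hret : wstar ⬝ᵥ μ = R * √q := by
    rw [hw, transpose_mulVec_dotProduct, dotProduct_comm, dotProduct_smul, smul_eq_mul]
    field_simp
    exact (Real.sq_sqrt hq.le).symm
  refine ⟨⟨xstar, hw⟩, hrisk.le, ?_⟩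
  rintro _ hw0 ⟨x, rfl⟩ hx
  rw [risk] at hx ⊢
  have hx0 : x ≠ 0 := by rintro rfl; simp at hw0
  rw [hrisk, hret, Real.sqrt_sq hR.le, transpose_mulVec_dotProduct]
  refine sub_div_le_mul_sub_div hr (Real.sqrt_pos.mpr ?_) ?_
    (hA.dotProduct_le_sqrt_mul_sqrt_inv _ _)
  · simpa using hA.dotProduct_mulVec_pos hx0
  · exact (Real.sqrt_le_sqrt hx).trans_eq (Real.sqrt_sq hR.le)
end

section
/- Let μ ∈ ℝ^p, Σ symmetric positive definite, G a k×p matrix of rank k, Θ = [[1, μᵀ],[μ, Σ + μμᵀ]], and G̃ = [[1,0],[0,G]] of size (k+1)×(p+1). Then Θ⁻¹ - G̃ᵀ(G̃ΘG̃ᵀ)⁻¹G̃ equals the block matrix [[μᵀΣ⁻¹μ - μᵀPμ, -μᵀΣ⁻¹ + μᵀP],[-Σ⁻¹μ + Pμ, Σ⁻¹ - P]], where P = Gᵀ(GΣGᵀ)⁻¹G. -/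
open Matrix

/-!
Write `Θ(v, B)` for the augmented second moment `[[1, vᵀ], [v, B + v vᵀ]]`. A direct block
computation shows `Θ(v, B)⁻¹ = Π(v, B⁻¹)` with `Π(v, Q) = [[1 + vᵀQv, -vᵀQ], [-Qv, Q]]`.
Both shapes are stable under the augmented projection `G̃ = diag(1, G)`:
`G̃ Θ(v, B) G̃ᵀ = Θ(Gv, G B Gᵀ)` and `G̃ᵀ Π(Gv, Q) G̃ = Π(v, Gᵀ Q G)`. Hence
`Θ⁻¹ - G̃ᵀ(G̃ΘG̃ᵀ)⁻¹G̃ = Π(μ, Σ⁻¹) - Π(μ, P)`, and the constant corner entries cancel.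
Invertibility of `GΣGᵀ` comes from `Σ ≻ 0` and the injectivity of `x ↦ xᵀG` (full row rank).
-/

namespace Matrix

variable {R : Type*} [CommRing R] {m n : Type*} [Fintype n]

theorem vecMul_injective_of_rank_eq_card {K : Type*} [Field K] [Fintype m] (A : Matrix m n K)
    (hA : A.rank = Fintype.card m) : Function.Injective A.vecMul := by
  rw [vecMul_injective_iff, linearIndependent_iff_card_eq_finrank_span, Set.finrank,
    ← rank_eq_finrank_span_row, hA]

def augment (G : Matrix m n R) : Matrix (Fin 1 ⊕ m) (Fin 1 ⊕ n) R := fromBlocks 1 0 0 G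

def augmentedSecondMoment (v : n → R) (B : Matrix n n R) : Matrix (Fin 1 ⊕ n) (Fin 1 ⊕ n) R :=
  fromBlocks 1 (replicateRow (Fin 1) v) (replicateCol (Fin 1) v) (B + vecMulVec v v)

def augmentedPrecision (v : n → R) (Q : Matrix n n R) : Matrix (Fin 1 ⊕ n) (Fin 1 ⊕ n) R :=
  fromBlocks (of fun _ _ => 1 + v ⬝ᵥ Q *ᵥ v) (-replicateRow (Fin 1) (v ᵥ* Q))
    (-replicateCol (Fin 1) (Q *ᵥ v)) Q

theorem augment_mul_augmentedSecondMoment_mul_transpose (G : Matrix m n R) (v : n → R)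
    (B : Matrix n n R) :
    augment G * augmentedSecondMoment v B * (augment G)ᵀ =
      augmentedSecondMoment (G *ᵥ v) (G * B * Gᵀ) := by
  rw [augment, augmentedSecondMoment, augmentedSecondMoment, fromBlocks_transpose,
    fromBlocks_multiply, fromBlocks_multiply]
  simp only [Matrix.mul_one, Matrix.one_mul, Matrix.zero_mul, Matrix.mul_zero, transpose_one,
    transpose_zero, add_zero, zero_add, zero_mulVec, replicateCol_zero, zero_vecMulVec,
    Matrix.mul_add, Matrix.add_mul, ← replicateCol_mulVec, ← replicateRow_vecMul, vecMul_transpose,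
    mul_vecMulVec, vecMulVec_mul]

theorem transpose_augment_mul_augmentedPrecision_mul [Fintype m] (G : Matrix m n R) (v : n → R)
    (Q : Matrix m m R) :
    (augment G)ᵀ * augmentedPrecision (G *ᵥ v) Q * augment G =
      augmentedPrecision v (Gᵀ * Q * G) := by
  rw [augment, augmentedPrecision, augmentedPrecision, fromBlocks_transpose, fromBlocks_multiply,
    fromBlocks_multiply]
  simp only [Matrix.mul_one, Matrix.one_mul, Matrix.zero_mul, Matrix.mul_zero, transpose_one,
    transpose_zero, add_zero, zero_add]
  congr 1
  · rw [← mulVec_mulVec, ← mulVec_mulVec, dotProduct_mulVec v, vecMul_transpose]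
  · rw [Matrix.neg_mul, ← replicateRow_vecMul, ← vecMul_vecMul, ← vecMul_vecMul, vecMul_transpose]
  · rw [Matrix.mul_neg, ← replicateCol_mulVec, ← mulVec_mulVec, ← mulVec_mulVec]

theorem augmentedPrecision_sub (v : n → R) (Q Q' : Matrix n n R) :
    augmentedPrecision v Q - augmentedPrecision v Q' =
      fromBlocks (of fun _ _ => v ⬝ᵥ Q *ᵥ v - v ⬝ᵥ Q' *ᵥ v)
        (of fun _ j => -(v ᵥ* Q) j + (v ᵥ* Q') j) (of fun i _ => -(Q *ᵥ v) i + (Q' *ᵥ v) i)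
        (Q - Q') := by
  ext (i | i) (j | j) <;> simp [augmentedPrecision]

theorem augmentedSecondMoment_mul_augmentedPrecision_inv [DecidableEq n] (v : n → R)
    {B : Matrix n n R} (hB : IsUnit B.det) :
    augmentedSecondMoment v B * augmentedPrecision v B⁻¹ = 1 := by
  have hBB : B * B⁻¹ = 1 := mul_nonsing_inv B hB
  have hBv : B *ᵥ (B⁻¹ *ᵥ v) = v := by rw [mulVec_mulVec, hBB, one_mulVec]
  rw [augmentedSecondMoment, augmentedPrecision, fromBlocks_multiply, ← fromBlocks_one]
  congr 1
  · ext i j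
    simp [replicateRow_mul_replicateCol, Matrix.one_apply, Subsingleton.elim i j]
  · rw [Matrix.one_mul, ← replicateRow_vecMul, neg_add_cancel]
  · rw [Matrix.mul_neg, ← replicateCol_mulVec, add_mulVec, hBv, vecMulVec_mulVec]
    ext i j
    simp [Matrix.mul_apply, mul_add, mul_comm]
  · rw [Matrix.add_mul, hBB, vecMulVec_eq (Fin 1), Matrix.mul_assoc, ← replicateRow_vecMul,
      Matrix.mul_neg, add_comm 1]
    exact neg_add_cancel_left _ 1

theorem inv_augmentedSecondMoment [DecidableEq n] (v : n → R) {B : Matrix n n R}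
    (hB : IsUnit B.det) : (augmentedSecondMoment v B)⁻¹ = augmentedPrecision v B⁻¹ :=
  inv_eq_right_inv (augmentedSecondMoment_mul_augmentedPrecision_inv v hB)

end Matrix

theorem delta_inverse_second_moment {p k : ℕ} (μ : Fin p → ℝ)
    (S : Matrix (Fin p) (Fin p) ℝ) (hS : S.PosDef)
    (G : Matrix (Fin k) (Fin p) ℝ) (hG : G.rank = k)
    (Θ : Matrix (Fin 1 ⊕ Fin p) (Fin 1 ⊕ Fin p) ℝ)
    (hΘ : Θ = Matrix.fromBlocks
      (Matrix.of fun (_ : Fin 1) (_ : Fin 1) => (1 : ℝ))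
      (Matrix.of fun (_ : Fin 1) j => μ j)
      (Matrix.of fun i (_ : Fin 1) => μ i)
      (S + Matrix.vecMulVec μ μ))
    (Gt : Matrix (Fin 1 ⊕ Fin k) (Fin 1 ⊕ Fin p) ℝ)
    (hGt : Gt = Matrix.fromBlocks 1 0 0 G)
    (P : Matrix (Fin p) (Fin p) ℝ)
    (hP : P = Gᵀ * (G * S * Gᵀ)⁻¹ * G) :
    Θ⁻¹ - Gtᵀ * (Gt * Θ * Gtᵀ)⁻¹ * Gt =
      Matrix.fromBlocks
        (Matrix.of fun (_ : Fin 1) (_ : Fin 1) => μ ⬝ᵥ S⁻¹ *ᵥ μ - μ ⬝ᵥ P *ᵥ μ)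
        (Matrix.of fun (_ : Fin 1) j => -(μ ᵥ* S⁻¹) j + (μ ᵥ* P) j)
        (Matrix.of fun i (_ : Fin 1) => -(S⁻¹ *ᵥ μ) i + (P *ᵥ μ) i)
        (S⁻¹ - P) := by
  have hGSG : (G * S * Gᵀ).PosDef := by
    simpa using hS.mul_mul_conjTranspose_same
      (G.vecMul_injective_of_rank_eq_card (by rwa [Fintype.card_fin]))
  obtain rfl : Θ = augmentedSecondMoment μ S := by
    rw [hΘ, augmentedSecondMoment]
    congr
    ext i j
    simp [one_apply, Subsingleton.elim i j]
  obtain rfl : Gt = augment G := hGt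
  rw [augment_mul_augmentedSecondMoment_mul_transpose,
    inv_augmentedSecondMoment μ hS.det_pos.ne'.isUnit,
    inv_augmentedSecondMoment _ hGSG.det_pos.ne'.isUnit,
    transpose_augment_mul_augmentedPrecision_mul, augmentedPrecision_sub, hP]
end
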